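/- arXiv:1611.07491 — 9 statements merged into one kernel-verified Lean document; each statement's English description precedes it below -/
import Mathlib

section
/- If a set S ⊆ ℝⁿ is strongly nonconvex (i.e., there exists an infinite subset R ⊆ S such that for all pairs x, y ∈ R with x ≠ y, the midpoint (x+y)/2 is not in S), then S is not MICP representable. -/
/-- A vector in `Fin d → ℝ` is integral if each coordinate is an integer. -/
def IsIntegerVec {d : ℕ} (z : Fin d → ℝ) : Prop := ∀ i, ∃ m : ℤ, z i = (m : ℝ)

/-- `S ⊆ ℝⁿ` is MICP representable: there are `p, d` and a closed convex set
`M ⊆ ℝⁿ × ℝᵖ × ℝᵈ` such that `S` is the projection onto `x` of the points of `M`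
whose `z`-part is integral. -/
def MICPRepresentable {n : ℕ} (S : Set (Fin n → ℝ)) : Prop :=
  ∃ (p d : ℕ) (M : Set ((Fin n → ℝ) × (Fin p → ℝ) × (Fin d → ℝ))),
    IsClosed M ∧ Convex ℝ M ∧
    S = {x | ∃ (y : Fin p → ℝ) (z : Fin d → ℝ), IsIntegerVec z ∧ (x, y, z) ∈ M}

/-- `S` is strongly nonconvex: an infinite subset `R ⊆ S` whose pairwise midpoints
avoid `S`. -/
def StronglyNonconvex {n : ℕ} (S : Set (Fin n → ℝ)) : Prop :=
  ∃ R : Set (Fin n → ℝ), R ⊆ S ∧ R.Infinite ∧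
    ∀ x ∈ R, ∀ y ∈ R, x ≠ y → (1 / 2 : ℝ) • (x + y) ∉ S

theorem stmt0 {n : ℕ} (S : Set (Fin n → ℝ)) (h : StronglyNonconvex S) :
    ¬ MICPRepresentable S := by
  obtain ⟨R, hRS, hRinf, hmid⟩ := h
  rintro ⟨p, d, M, -, hconv, hS⟩
  -- choose witnesses
  have hwit : ∀ x ∈ R, ∃ y : Fin p → ℝ, ∃ z : Fin d → ℝ,
      IsIntegerVec z ∧ (x, y, z) ∈ M := by
    intro x hx
    have := hRS hx
    rw [hS] at this
    exact this
  classical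
  choose! Y Z hint hmem using hwit
  -- integer coordinates
  have hintz : ∀ x ∈ R, ∀ i, ∃ m : ℤ, Z x i = (m : ℝ) := fun x hx i => hint x hx i
  choose! m hm using hintz
  -- parity map
  let f : (Fin n → ℝ) → (Fin d → ZMod 2) := fun x i => (m x i : ZMod 2)
  obtain ⟨x, hx, x', hx', hne, hfeq⟩ :=
    hRinf.exists_ne_map_eq_of_mapsTo (f := f) (Set.mapsTo_univ f R) Set.finite_univ
  -- midpoint of witnesses lies in M
  have hmemmid := hconv (hmem x hx) (hmem x' hx')
    (by norm_num : (0:ℝ) ≤ 1/2) (by norm_num : (0:ℝ) ≤ 1/2) (by norm_num)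
  have heq : (1/2 : ℝ) • ((x, Y x, Z x) : (Fin n → ℝ) × (Fin p → ℝ) × (Fin d → ℝ))
      + (1/2 : ℝ) • (x', Y x', Z x')
      = ((1/2 : ℝ) • (x + x'), (1/2 : ℝ) • (Y x + Y x'), (1/2 : ℝ) • (Z x + Z x')) := by
    simp [Prod.ext_iff, smul_add]
  rw [heq] at hmemmid
  -- the z-part of the midpoint is integral
  have hintmid : IsIntegerVec ((1/2 : ℝ) • (Z x + Z x')) := by
    intro i
    have hpar : (m x i : ZMod 2) = (m x' i : ZMod 2) := congrFun hfeq i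
    have : (2 : ℤ) ∣ (m x i - m x' i) := by
      have := (ZMod.intCast_eq_intCast_iff' (m x i) (m x' i) 2).mp hpar
      omega
    obtain ⟨k, hk⟩ := this
    refine ⟨m x' i + k, ?_⟩
    have h1 : Z x i = (m x i : ℝ) := hm x hx i
    have h2 : Z x' i = (m x' i : ℝ) := hm x' hx' i
    have hmx : (m x i : ℝ) = (m x' i : ℝ) + 2 * (k : ℝ) := by
      have : m x i = m x' i + 2 * k := by omega
      exact_mod_cast congrArg (fun t : ℤ => (t : ℝ)) this
    simp only [Pi.smul_apply, Pi.add_apply, h1, h2, hmx, smul_eq_mul]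
    push_cast
    ring
  -- contradiction with strong nonconvexity
  exact hmid x hx x' hx' hne (by rw [hS]; exact ⟨_, _, hintmid, hmemmid⟩)
end

section
/- The set of prime numbers is strongly nonconvex as a subset of ℝ: there exists an infinite set R of primes such that for all distinct p, q ∈ R, (p+q)/2 is not prime. -/
/-- CRT step: for a finite set `s` of positive naturals, there are `m, a` with
`a` coprime to `m` such that for each `p ∈ s` there is an odd prime `ℓ ∣ m`
with `ℓ ∣ p + a`. -/
lemma crt_aux (s : Finset ℕ) (hs : ∀ p ∈ s, 0 < p) :
    ∃ m a : ℕ, 0 < m ∧ Nat.Coprime a m ∧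
      ∀ p ∈ s, ∃ ℓ : ℕ, ℓ.Prime ∧ 2 < ℓ ∧ ℓ ∣ m ∧ ℓ ∣ p + a := by
  classical
  induction s using Finset.induction_on with
  | empty => exact ⟨1, 1, one_pos, Nat.coprime_one_left 1, by simp⟩
  | @insert p s hp ih =>
    obtain ⟨m, a, hm, hcop, hall⟩ := ih (fun q hq => hs q (Finset.mem_insert_of_mem hq))
    have hppos : 0 < p := hs p (Finset.mem_insert_self p s)
    obtain ⟨ℓ, hℓge, hℓp⟩ := Nat.exists_infinite_primes (max m p + 3)
    have hℓm : m < ℓ := lt_of_lt_of_le (by omega : m < max m p + 3) hℓge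
    have hℓgtp : p < ℓ := lt_of_lt_of_le (by omega : p < max m p + 3) hℓge
    have hℓ2 : 2 < ℓ := lt_of_lt_of_le (by omega : 2 < max m p + 3) hℓge
    have hℓndvd : ¬ ℓ ∣ m := fun h => absurd (Nat.le_of_dvd hm h) (not_le.mpr hℓm)
    have hcopmℓ : Nat.Coprime m ℓ := ((hℓp.coprime_iff_not_dvd).mpr hℓndvd).symm
    obtain ⟨k, hk1, hk2⟩ := Nat.chineseRemainder hcopmℓ a (ℓ - p)
    refine ⟨m * ℓ, k, Nat.mul_pos hm hℓp.pos, ?_, ?_⟩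
    · -- coprimality
      have h1 : Nat.Coprime k m := by
        have := (Nat.ModEq.gcd_eq hk1)
        unfold Nat.Coprime
        rw [this]; exact hcop
      have h2 : Nat.Coprime k ℓ := by
        have hne : ¬ ℓ ∣ k := by
          intro hdvd
          have hmod : k % ℓ = 0 := Nat.mod_eq_zero_of_dvd hdvd
          have hthis : (ℓ - p) % ℓ = k % ℓ := (hk2.symm : Nat.ModEq ℓ (ℓ - p) k)
          rw [Nat.mod_eq_of_lt (by omega : ℓ - p < ℓ)] at hthis
          omega
        exact ((hℓp.coprime_iff_not_dvd).mpr hne).symm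
      exact Nat.Coprime.mul_right h1 h2
    · intro q hq
      rcases Finset.mem_insert.mp hq with rfl | hqs
      · refine ⟨ℓ, hℓp, hℓ2, dvd_mul_left ℓ m, ?_⟩
        have h1 : q + k ≡ q + (ℓ - q) [MOD ℓ] := Nat.ModEq.add_left q hk2
        have h0 : q + (ℓ - q) = ℓ := by omega
        rw [h0] at h1
        exact Nat.modEq_zero_iff_dvd.mp (h1.trans (Nat.modEq_zero_iff_dvd.mpr dvd_rfl))
      · obtain ⟨ℓ', hℓ'p, hℓ'2, hℓ'm, hℓ'div⟩ := hall q hqs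
        refine ⟨ℓ', hℓ'p, hℓ'2, hℓ'm.mul_right ℓ, ?_⟩
        have hkmodℓ' : k ≡ a [MOD ℓ'] := Nat.ModEq.of_dvd hℓ'm hk1
        have : q + k ≡ q + a [MOD ℓ'] := Nat.ModEq.add_left q hkmodℓ'
        have h0 : q + a ≡ 0 [MOD ℓ'] := Nat.modEq_zero_iff_dvd.mpr hℓ'div
        exact Nat.modEq_zero_iff_dvd.mp (this.trans h0)

/-- Step lemma: given a finite set `s` of positive naturals and a bound `N`,
there is a prime `q > N` such that for every `p ∈ s`, any `r` with `2r = p + q`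
is not prime. -/
lemma step_aux (s : Finset ℕ) (hs : ∀ p ∈ s, 0 < p) (N : ℕ) :
    ∃ q : ℕ, q.Prime ∧ N < q ∧ ∀ p ∈ s, ∀ r : ℕ, 2 * r = p + q → ¬ r.Prime := by
  obtain ⟨m, a, hm, hcop, hall⟩ := crt_aux s hs
  haveI : NeZero m := ⟨hm.ne'⟩
  have hunit : IsUnit (a : ZMod m) := (ZMod.isUnit_iff_coprime a m).mpr hcop
  obtain ⟨q, hqgt, hqp, hqmod⟩ :=
    Nat.forall_exists_prime_gt_and_eq_mod hunit (max N (2 * m))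
  have hqN : N < q := lt_of_le_of_lt (le_max_left _ _) hqgt
  have hq2m : 2 * m < q := lt_of_le_of_lt (le_max_right _ _) hqgt
  refine ⟨q, hqp, hqN, ?_⟩
  intro p hp r hr hrp
  obtain ⟨ℓ, hℓp, hℓ2, hℓm, hℓdiv⟩ := hall p hp
  have hqa : q ≡ a [MOD m] := (ZMod.natCast_eq_natCast_iff q a m).mp hqmod
  have hqaℓ : q ≡ a [MOD ℓ] := Nat.ModEq.of_dvd hℓm hqa
  have hdvd : ℓ ∣ p + q := by
    have h1 : p + q ≡ p + a [MOD ℓ] := Nat.ModEq.add_left p hqaℓ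
    have h2 : p + a ≡ 0 [MOD ℓ] := Nat.modEq_zero_iff_dvd.mpr hℓdiv
    exact Nat.modEq_zero_iff_dvd.mp (h1.trans h2)
  have hdvd2r : ℓ ∣ 2 * r := hr ▸ hdvd
  have hcopℓ2 : Nat.Coprime ℓ 2 := by
    refine (Nat.coprime_primes hℓp Nat.prime_two).mpr (by omega)
  have hℓr : ℓ ∣ r := hcopℓ2.dvd_of_dvd_mul_left hdvd2r
  have hℓlem : ℓ ≤ m := Nat.le_of_dvd hm hℓm
  have hℓltr : ℓ < r := by omega
  rcases (Nat.Prime.eq_one_or_self_of_dvd hrp ℓ hℓr) with h | h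
  · exact absurd h hℓp.one_lt.ne'
  · omega

/-- The goodness predicate for our finite approximations. -/
def GoodSet (s : Finset ℕ) : Prop :=
  (∀ p ∈ s, p.Prime) ∧
    ∀ p ∈ s, ∀ q ∈ s, p ≠ q → ∀ r : ℕ, 2 * r = p + q → ¬ r.Prime

/-- The recursively built chain of finite sets of primes. -/
noncomputable def primeChain : (n : ℕ) → {s : Finset ℕ // GoodSet s ∧ s.card = n}
  | 0 => ⟨∅, by constructor <;> simp [GoodSet]⟩
  | n + 1 => by
    classical
    let S := primeChain n
    have hpos : ∀ p ∈ S.1, 0 < p := fun p hp => (S.2.1.1 p hp).pos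
    have h := step_aux S.1 hpos (S.1.sup id)
    let q := Classical.choose h
    have hq := Classical.choose_spec h
    have hqnot : q ∉ S.1 := by
      intro hmem
      have : q ≤ S.1.sup id := Finset.le_sup (f := id) hmem
      omega
    refine ⟨insert q S.1, ⟨⟨?_, ?_⟩, ?_⟩⟩
    · intro p hp
      rcases Finset.mem_insert.mp hp with rfl | hps
      · exact hq.1
      · exact S.2.1.1 p hps
    · intro p hp p' hp' hne r hr
      rcases Finset.mem_insert.mp hp with rfl | hps
      · rcases Finset.mem_insert.mp hp' with rfl | hp's
        · exact absurd rfl hne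
        · exact hq.2.2 p' hp's r (by omega)
      · rcases Finset.mem_insert.mp hp' with rfl | hp's
        · exact hq.2.2 p hps r (by omega)
        · exact S.2.1.2 p hps p' hp's hne r hr
    · rw [Finset.card_insert_of_notMem hqnot, S.2.2]

lemma primeChain_mono : ∀ {m n : ℕ}, m ≤ n → (primeChain m).1 ⊆ (primeChain n).1 := by
  intro m n h
  induction n, h using Nat.le_induction with
  | base => exact subset_rfl
  | succ n hmn ih =>
    refine ih.trans ?_
    rw [primeChain]
    exact Finset.subset_insert _ _

theorem stmt4 :
    ∃ R : Set ℕ, (∀ p ∈ R, p.Prime) ∧ R.Infinite ∧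
      ∀ p ∈ R, ∀ q ∈ R, p ≠ q →
        ¬ ∃ r : ℕ, r.Prime ∧ (r : ℝ) = ((p : ℝ) + (q : ℝ)) / 2 := by
  classical
  refine ⟨{p : ℕ | ∃ n, p ∈ (primeChain n).1}, ?_, ?_, ?_⟩
  · rintro p ⟨n, hn⟩
    exact (primeChain n).2.1.1 p hn
  · intro hfin
    set R := {p : ℕ | ∃ n, p ∈ (primeChain n).1} with hR
    have hfin' : R.Finite := hfin
    have hsub : (primeChain (hfin'.toFinset.card + 1)).1 ⊆ hfin'.toFinset := by
      intro x hx
      simp only [Set.Finite.mem_toFinset]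
      exact ⟨_, hx⟩
    have hcard := Finset.card_le_card hsub
    rw [(primeChain (hfin'.toFinset.card + 1)).2.2] at hcard
    omega
  · rintro p ⟨n, hn⟩ q ⟨m, hm⟩ hne ⟨r, hrp, hreq⟩
    have h2r : (2 * r : ℝ) = (p : ℝ) + (q : ℝ) := by
      rw [hreq]; ring
    have h2rn : 2 * r = p + q := by exact_mod_cast h2r
    rcases le_total n m with h | h
    · exact (primeChain m).2.1.2 p (primeChain_mono h hn) q hm hne r h2rn hrp
    · exact (primeChain n).2.1.2 p hn q (primeChain_mono h hm) hne r h2rn hrp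
end

section
/- Given a finite set of primes p₁, …, pₙ, all odd and greater than 2, such that no midpoint (pᵢ+pⱼ)/2 (i ≠ j) is prime, there exists a prime p ∉ {p₁,…,pₙ}, p ≠ 2, such that for every i, (p + pᵢ)/2 is not prime. -/
theorem stmt5 (ps : Finset ℕ)
    (hprime : ∀ p ∈ ps, p.Prime) (hodd : ∀ p ∈ ps, Odd p) (h2 : ∀ p ∈ ps, 2 < p)
    (hmid : ∀ p ∈ ps, ∀ q ∈ ps, p ≠ q → ¬ ∃ m : ℕ, m.Prime ∧ 2 * m = p + q) :
    ∃ p : ℕ, p.Prime ∧ p ∉ ps ∧ p ≠ 2 ∧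
      ∀ q ∈ ps, ¬ ∃ m : ℕ, m.Prime ∧ 2 * m = p + q := by
  set N := ∏ q ∈ ps, (q + 1) with hN
  have hN0 : N ≠ 0 := Finset.prod_ne_zero_iff.mpr fun q _ => Nat.succ_ne_zero q
  obtain ⟨p, hp, hpgt, hpmod⟩ := Nat.exists_prime_gt_modEq_one (k := N) (N + 2) hN0
  have hle : ∀ q ∈ ps, q + 1 ≤ N := fun q hq =>
    Finset.single_le_prod' (fun i _ => Nat.one_le_iff_ne_zero.mpr (Nat.succ_ne_zero i)) hq
  have hdvd1 : N ∣ p - 1 := (Nat.modEq_iff_dvd' (le_of_lt hp.one_lt)).mp hpmod.symm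
  refine ⟨p, hp, ?_, ?_, ?_⟩
  · intro hmem
    have := hle p hmem
    omega
  · omega
  · rintro q hq ⟨m, hm, hpq⟩
    have hq3 : 2 < q := h2 q hq
    have hqodd : Odd q := hodd q hq
    obtain ⟨d, hd⟩ : 2 ∣ q + 1 := by
      obtain ⟨c, hc⟩ := hqodd; omega
    have hdvd2 : (q + 1) ∣ N := Finset.dvd_prod_of_mem _ hq
    have hdvd3 : (q + 1) ∣ p - 1 := hdvd2.trans hdvd1
    have hdvd4 : (q + 1) ∣ 2 * m := by
      have hp1 : 1 ≤ p := hp.one_lt.le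
      have : 2 * m = (p - 1) + (q + 1) := by omega
      rw [this]
      exact Nat.dvd_add hdvd3 dvd_rfl
    have hdm : d ∣ m := by
      rcases hdvd4 with ⟨c, hc⟩
      have h2m : 2 * m = 2 * (d * c) := by rw [hc, hd]; ring
      exact ⟨c, Nat.eq_of_mul_eq_mul_left (by norm_num) h2m⟩
    have hqN : q + 1 ≤ N := hle q hq
    rcases (hm.eq_one_or_self_of_dvd d hdm) with h1 | h1 <;> omega
end

section
/- The set S = {(x₁, x₂) ∈ ℝ² : x₁ ∈ ℕ, x₁ ≥ 1, x₁·x₂ ≥ 1} cannot be written as ⋃_{i=1}^k Sⁱ + intcone(r₁,…,r_t) for any finite collection of nonempty convex sets Sⁱ ⊆ ℝ² and integer vectors r₁,…,r_t ∈ ℤ², where intcone(r₁,…,r_t) = {Σ λᵢ rᵢ : λᵢ ∈ ℕ}. -/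
open Pointwise

/-!
Every point `pₙ = (n + 1, 1 / (n + 1))` of the lower boundary of `S` lies in some `Tⁱ + C`, where
`C` is the integer cone, so by pigeonhole two of them, `pₙ = s + c` and `pₘ = s' + c'`, use the
same piece `Tⁱ`. Since `0 ∈ C`, each `Tⁱ` is a convex subset of `S`, hence lies on a single
vertical line; so `s + c'` sits on the line of `pₘ` and `s' + c` on that of `pₙ`, and lying above
both boundary points forces `s = s'`. Then `c - c' = pₙ - pₘ` has second coordinate
`1 / (n + 1) - 1 / (m + 1)`, an integer of absolute value `< 1`, so `n = m`.
-/

def intCone {t : ℕ} (r : Fin t → ℤ × ℤ) : Set (ℝ × ℝ) :=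
  {v | ∃ lam : Fin t → ℕ, v = ∑ j, (lam j : ℝ) • (((r j).1 : ℝ), ((r j).2 : ℝ))}

lemma zero_mem_intCone {t : ℕ} (r : Fin t → ℤ × ℤ) : (0 : ℝ × ℝ) ∈ intCone r :=
  ⟨0, by simp⟩

lemma exists_intCast_snd_of_mem_intCone {t : ℕ} {r : Fin t → ℤ × ℤ} {v : ℝ × ℝ}
    (hv : v ∈ intCone r) : ∃ N : ℤ, v.2 = N := by
  obtain ⟨lam, rfl⟩ := hv
  exact ⟨∑ j, (lam j : ℤ) * (r j).2, by simp [Prod.snd_sum]⟩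

lemma Convex.subsingleton_of_subset_range_intCast {s : Set ℝ} (hs : Convex ℝ s)
    (hsZ : s ⊆ Set.range ((↑) : ℤ → ℝ)) : s.Subsingleton := by
  suffices ∀ x ∈ s, ∀ y ∈ s, ¬ x < y from fun x hx y hy =>
    le_antisymm (not_lt.1 (this y hy x hx)) (not_lt.1 (this x hx y hy))
  intro x hx y hy hxy
  obtain ⟨a, rfl⟩ := hsZ hx
  obtain ⟨b, rfl⟩ := hsZ hy
  have hab : (a : ℝ) + 1 ≤ b := by exact_mod_cast Int.cast_lt.1 hxy
  obtain ⟨c, hc⟩ := hsZ (hs.ordConnected.out hx hy ⟨by linarith, by linarith⟩ :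
    (a : ℝ) + 1 / 2 ∈ s)
  have : (2 * c : ℤ) = 2 * a + 1 := by exact_mod_cast (by linarith : (2 * c : ℝ) = 2 * a + 1)
  omega

def hyperbolicSet : Set (ℝ × ℝ) :=
  {x | (∃ m : ℕ, x.1 = (m : ℝ)) ∧ 1 ≤ x.1 ∧ 1 ≤ x.1 * x.2}

lemma Convex.fst_eq_of_subset_hyperbolicSet {T : Set (ℝ × ℝ)} (hT : Convex ℝ T)
    (hTS : T ⊆ hyperbolicSet) {x y : ℝ × ℝ} (hx : x ∈ T) (hy : y ∈ T) : x.1 = y.1 := by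
  refine (hT.linear_image (LinearMap.fst ℝ ℝ ℝ)).subsingleton_of_subset_range_intCast ?_
    (Set.mem_image_of_mem _ hx) (Set.mem_image_of_mem _ hy)
  rintro _ ⟨z, hz, rfl⟩
  obtain ⟨m, hm⟩ := (hTS hz).1
  exact ⟨m, by simp [hm]⟩

noncomputable def cornerPoint (n : ℕ) : ℝ × ℝ := ((n : ℝ) + 1, ((n : ℝ) + 1)⁻¹)

lemma cornerPoint_mem_hyperbolicSet (n : ℕ) : cornerPoint n ∈ hyperbolicSet :=
  ⟨⟨n + 1, by simp [cornerPoint]⟩, by simp [cornerPoint],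
    (mul_inv_cancel₀ (by positivity : (n : ℝ) + 1 ≠ 0)).ge⟩

lemma snd_le_of_add_mem_hyperbolicSet {s s' c : ℝ × ℝ} {n : ℕ} (h1 : s.1 = s'.1)
    (hmem : s + c ∈ hyperbolicSet) (hp : s' + c = cornerPoint n) : s'.2 ≤ s.2 := by
  have hp1 : s'.1 + c.1 = n + 1 := congrArg Prod.fst hp
  have hp2 : s'.2 + c.2 = ((n : ℝ) + 1)⁻¹ := congrArg Prod.snd hp
  have hprod : 1 ≤ ((n : ℝ) + 1) * (s.2 + c.2) := by
    rw [← hp1, ← h1]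
    exact hmem.2.2
  have hinv : ((n : ℝ) + 1)⁻¹ ≤ s.2 + c.2 := (inv_le_iff_one_le_mul₀' (by positivity)).2 hprod
  linarith

lemma eq_of_intCast_eq_inv_sub_inv {n m : ℕ} {N : ℤ}
    (hN : (N : ℝ) = ((n : ℝ) + 1)⁻¹ - ((m : ℝ) + 1)⁻¹) : n = m := by
  have hn : ((n : ℝ) + 1)⁻¹ ≤ 1 := inv_le_one_of_one_le₀ (by simp)
  have hm : ((m : ℝ) + 1)⁻¹ ≤ 1 := inv_le_one_of_one_le₀ (by simp)
  have hn0 : 0 < ((n : ℝ) + 1)⁻¹ := by positivity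
  have hm0 : 0 < ((m : ℝ) + 1)⁻¹ := by positivity
  obtain rfl : N = 0 := by
    have h1 : N < 1 := by exact_mod_cast (by linarith : (N : ℝ) < 1)
    have h2 : -1 < N := by exact_mod_cast (by linarith : (-1 : ℝ) < N)
    omega
  rw [Int.cast_zero, eq_comm, sub_eq_zero] at hN
  exact_mod_cast add_right_cancel (inv_injective hN)

lemma eq_of_cornerPoint_mem_add {T C : Set (ℝ × ℝ)} (hT : Convex ℝ T)
    (hTS : T ⊆ hyperbolicSet) (hTC : T + C ⊆ hyperbolicSet) (hC : ∀ c ∈ C, ∃ N : ℤ, c.2 = N)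
    {n m : ℕ} (hn : cornerPoint n ∈ T + C) (hm : cornerPoint m ∈ T + C) : n = m := by
  obtain ⟨s, hs, c, hc, hsc⟩ := hn
  obtain ⟨s', hs', c', hc', hsc'⟩ := hm
  have h1 := hT.fst_eq_of_subset_hyperbolicSet hTS hs hs'
  obtain rfl : s = s' := Prod.ext h1 (le_antisymm
    (snd_le_of_add_mem_hyperbolicSet h1.symm (hTC (Set.add_mem_add hs' hc)) hsc)
    (snd_le_of_add_mem_hyperbolicSet h1 (hTC (Set.add_mem_add hs hc')) hsc'))
  obtain ⟨N, hN⟩ := hC c hc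
  obtain ⟨N', hN'⟩ := hC c' hc'
  have h2 := congrArg Prod.snd hsc
  have h2' := congrArg Prod.snd hsc'
  simp only [cornerPoint, Prod.snd_add] at h2 h2'
  exact eq_of_intCast_eq_inv_sub_inv (N := N - N') (by push_cast; linarith)

theorem stmt7 :
    ¬ ∃ (k t : ℕ) (T : Fin k → Set (ℝ × ℝ)) (r : Fin t → ℤ × ℤ),
      (∀ i, (T i).Nonempty ∧ Convex ℝ (T i)) ∧
      {x : ℝ × ℝ | (∃ m : ℕ, x.1 = (m : ℝ)) ∧ 1 ≤ x.1 ∧ 1 ≤ x.1 * x.2} =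
        (⋃ i, T i) +
          {v : ℝ × ℝ | ∃ lam : Fin t → ℕ,
            v = ∑ j, (lam j : ℝ) • (((r j).1 : ℝ), ((r j).2 : ℝ))} := by
  rintro ⟨k, t, T, r, hT, hEq⟩
  change hyperbolicSet = (⋃ i, T i) + intCone r at hEq
  have hTC (i : Fin k) : T i + intCone r ⊆ hyperbolicSet :=
    hEq ▸ Set.add_subset_add_right (Set.subset_iUnion T i)
  have hTS (i : Fin k) : T i ⊆ hyperbolicSet :=
    (Set.subset_add_left _ (zero_mem_intCone r)).trans (hTC i)
  have hcover (n : ℕ) : ∃ i, cornerPoint n ∈ T i + intCone r := by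
    simpa [hEq, Set.iUnion_add] using cornerPoint_mem_hyperbolicSet n
  choose piece hpiece using hcover
  obtain ⟨n, m, hnm, hsame⟩ := Finite.exists_ne_map_eq_of_infinite piece
  exact hnm <| eq_of_cornerPoint_mem_add (hT _).2 (hTS _) (hTC _)
    (fun _ => exists_intCast_snd_of_mem_intCone) (hpiece n) (hsame ▸ hpiece m)
end

section
/- A set S ⊆ ℝⁿ is MICP representable if and only if there exist d, p ∈ ℕ, a convex set C ⊆ ℝᵈ, and a closed convex family (B_z)_{z∈C} of sets in ℝ^(n+p) such that S = ⋃_{z ∈ C ∩ ℤᵈ} proj_x(B_z). -/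
open Pointwise Filter Topology

/-- A convex family of convex sets indexed by a convex set. -/
def ConvexFamily {E F : Type*} [AddCommMonoid E] [SMul ℝ E]
    [AddCommMonoid F] [SMul ℝ F] (C : Set E) (A : E → Set F) : Prop :=
  (∀ z ∈ C, Convex ℝ (A z)) ∧
  ∀ z ∈ C, ∀ z' ∈ C, ∀ a b : ℝ, 0 ≤ a → 0 ≤ b → a + b = 1 →
    a • A z + b • A z' ⊆ A (a • z + b • z')

/-- The family is closed: each member is closed, and limits of convergent
sequences `x_m ∈ A (z_m)` with `z_m → z ∈ C` lie in `A z`. -/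
def ClosedFamily {E F : Type*} [TopologicalSpace E] [TopologicalSpace F]
    (C : Set E) (A : E → Set F) : Prop :=
  (∀ z ∈ C, IsClosed (A z)) ∧
  ∀ (zs : ℕ → E) (xs : ℕ → F) (z : E) (x : F),
    (∀ m, zs m ∈ C) → (∀ m, xs m ∈ A (zs m)) → z ∈ C →
    Tendsto zs atTop (nhds z) → Tendsto xs atTop (nhds x) → x ∈ A z

/-!
Slicing a closed convex `M ⊆ ℝⁿ × ℝᵖ × ℝᵈ` along its last factor gives a closed convex family
over `C = ℝᵈ`. Conversely, index the countably many integer points `t` of `C` and let `M` be the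
set of `(x, y, c, z)` such that `z = ∑ μₜ t` is a possibly infinite convex combination,
`(x, y) ∈ B z`, and the cost `∑ μₜ φₜ` is at most `c`, where `φₜ` grows so fast that
`(1 + ‖t‖) / φₜ` is summable. Convexity of the family makes `M` convex. Along a sequence in `M`
with bounded cost, the weights are dominated by a summable sequence, so on a subsequence they
converge and the sums pass to the limit (Tannery); the limit point is again an infinite convex
combination, and such combinations stay in the convex set `C` because in finite dimension every
functional that is nonnegative on the centred points vanishes on them, which puts the centre in
the relative interior of their hull. Closedness of the family then makes `M` closed. An integer
`z` with `(x, y, c, z) ∈ M` is an integer point of `C`, and Dirac weights show that conversely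
every `x ∈ proj B t` is reached.
-/

open Set

section InfiniteConvexCombination

theorem Convex.zero_mem_interior_of_forall_nonneg_imp_eq {E : Type*} [AddCommGroup E]
    [Module ℝ E] [TopologicalSpace E] [IsTopologicalAddGroup E] [ContinuousSMul ℝ E] {K : Set E}
    (hK : Convex ℝ K) (hint : (interior K).Nonempty)
    (h : ∀ ℓ : StrongDual ℝ E, (∀ x ∈ K, 0 ≤ ℓ x) → ∀ x ∈ K, ℓ x = 0) :
    (0 : E) ∈ interior K := by
  by_contra h0
  obtain ⟨ℓ, hℓ⟩ := geometric_hahn_banach_point_open hK.interior isOpen_interior h0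
  rw [map_zero] at hℓ
  have hnonneg : ∀ x ∈ K, 0 ≤ ℓ x := by
    refine fun x hx => closure_minimal (fun a ha => (hℓ a ha).le)
      (isClosed_le continuous_const ℓ.continuous) ?_
    rw [hK.closure_interior_eq_closure_of_nonempty_interior hint]
    exact subset_closure hx
  obtain ⟨a, ha⟩ := hint
  exact (hℓ a ha).ne' (h ℓ hnonneg a (interior_subset ha))

variable {E : Type*} [NormedAddCommGroup E] [NormedSpace ℝ E] [FiniteDimensional ℝ E]

theorem zero_mem_affineSpan_of_forall_nonneg_imp_eq {S : Set E} (hS : S.Nonempty)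
    (h : ∀ ℓ : StrongDual ℝ E, (∀ x ∈ S, 0 ≤ ℓ x) → ∀ x ∈ S, ℓ x = 0) :
    (0 : E) ∈ affineSpan ℝ S := by
  by_contra h0
  obtain ⟨ℓ, u, hu, hℓ⟩ := geometric_hahn_banach_point_closed (affineSpan ℝ S).convex
    (affineSpan ℝ S).closed_of_finiteDimensional h0
  rw [map_zero] at hu
  have hpos : ∀ x ∈ S, 0 < ℓ x := fun x hx => hu.trans (hℓ x (subset_affineSpan ℝ S hx))
  obtain ⟨x, hx⟩ := hS
  exact (hpos x hx).ne' (h ℓ (fun y hy => (hpos y hy).le) x hx)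

theorem zero_mem_interior_convexHull_of_forall_nonneg_imp_eq {S : Set E} (hS : S.Nonempty)
    (hspan : Submodule.span ℝ S = ⊤)
    (h : ∀ ℓ : StrongDual ℝ E, (∀ x ∈ S, 0 ≤ ℓ x) → ∀ x ∈ S, ℓ x = 0) :
    (0 : E) ∈ interior (convexHull ℝ S) := by
  have h0 := zero_mem_affineSpan_of_forall_nonneg_imp_eq hS h
  have hspan_top : affineSpan ℝ S = ⊤ := by
    rw [← AffineSubspace.direction_eq_top_iff_of_nonempty ⟨0, h0⟩, eq_top_iff, ← hspan,
      Submodule.span_le]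
    intro x hx
    simpa using AffineSubspace.vsub_mem_direction (subset_affineSpan ℝ S hx) h0
  refine (convex_convexHull ℝ S).zero_mem_interior_of_forall_nonneg_imp_eq
    (interior_convexHull_nonempty_iff_affineSpan_eq_top.2 hspan_top) fun ℓ hℓ => ?_
  have hker : S ⊆ {x | ℓ x = 0} := fun x hx =>
    h ℓ (fun y hy => hℓ y (subset_convexHull ℝ S hy)) x hx
  exact fun x hx => convexHull_min hker (convex_hyperplane ℓ.isLinear 0) hx

theorem zero_mem_convexHull_of_forall_nonneg_imp_eq {S : Set E} (hS : S.Nonempty)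
    (h : ∀ ℓ : StrongDual ℝ E, (∀ x ∈ S, 0 ≤ ℓ x) → ∀ x ∈ S, ℓ x = 0) :
    (0 : E) ∈ convexHull ℝ S := by
  set V := Submodule.span ℝ S
  have hV : ∀ f : StrongDual ℝ V, (∀ x ∈ (↑) ⁻¹' S, 0 ≤ f x) → ∀ x ∈ (↑) ⁻¹' S, f x = 0 := by
    intro f hf x hx
    obtain ⟨g, hg, -⟩ := exists_extension_norm_eq V f
    rw [← hg]
    exact h g (fun y hy => (hg ⟨y, Submodule.subset_span hy⟩).symm ▸ hf _ hy) x hx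
  obtain ⟨x, hx⟩ := hS
  have h0 := interior_subset <| zero_mem_interior_convexHull_of_forall_nonneg_imp_eq
    ⟨⟨x, Submodule.subset_span hx⟩, hx⟩ Submodule.span_span_coe_preimage hV
  have := mem_image_of_mem V.subtype h0
  have hrange : S ⊆ range ((↑) : V → E) := fun y hy => ⟨⟨y, Submodule.subset_span hy⟩, rfl⟩
  rwa [LinearMap.image_convexHull, Submodule.coe_subtype, image_preimage_eq_of_subset hrange,
    ZeroMemClass.coe_zero] at this

theorem Convex.mem_of_hasSum {ι : Type*} {s : Set E} (hs : Convex ℝ s) {w : ι → ℝ} {τ : ι → E}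
    {b : E} (hw0 : ∀ i, 0 ≤ w i) (hw1 : HasSum w 1) (hτ : ∀ i, τ i ∈ s)
    (hb : HasSum (fun i => w i • τ i) b) : b ∈ s := by
  set S := {x | ∃ i, w i ≠ 0 ∧ τ i - b = x}
  have hS : S.Nonempty := by
    obtain ⟨i, hi⟩ : ∃ i, w i ≠ 0 := by
      by_contra! h
      exact one_ne_zero (hw1.unique (by simp [funext h]))
    exact ⟨_, i, hi, rfl⟩
  have hcentered : HasSum (fun i => w i • (τ i - b)) 0 := by
    simpa [smul_sub] using hb.sub (hw1.smul_const b)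
  have hS_flat : ∀ ℓ : StrongDual ℝ E, (∀ x ∈ S, 0 ≤ ℓ x) → ∀ x ∈ S, ℓ x = 0 := by
    rintro ℓ hℓ _ ⟨i, hi, rfl⟩
    have hterms : HasSum (fun j => w j * ℓ (τ j - b)) 0 := by
      simpa using ℓ.hasSum hcentered
    have hnonneg : ∀ j, 0 ≤ w j * ℓ (τ j - b) := fun j => by
      rcases eq_or_ne (w j) 0 with hj | hj
      · simp [hj]
      · exact mul_nonneg (hw0 j) (hℓ _ ⟨j, hj, rfl⟩)
    have := congrFun ((hasSum_zero_iff_of_nonneg hnonneg).1 hterms) i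
    exact (mul_eq_zero.1 this).resolve_left hi
  have hsub : S ⊆ (fun x => b + x) ⁻¹' s := by
    rintro _ ⟨i, -, rfl⟩
    simpa using hτ i
  simpa using convexHull_min hsub (hs.translate_preimage_right b)
    (zero_mem_convexHull_of_forall_nonneg_imp_eq hS hS_flat)

end InfiniteConvexCombination

theorem hasSum_of_tendsto_of_dominated {α β G : Type*} {l : Filter α} [l.NeBot]
    [NormedAddCommGroup G] [CompleteSpace G] {f : α → β → G} {g : β → G} {s : α → G} {a : G}
    {bound : β → ℝ} (hf : ∀ n, HasSum (f n) (s n)) (hs : Tendsto s l (𝓝 a))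
    (hbound : Summable bound) (hfg : ∀ k, Tendsto (fun n => f n k) l (𝓝 (g k)))
    (hfb : ∀ n k, ‖f n k‖ ≤ bound k) : HasSum g a := by
  have hlim := tendsto_tsum_of_dominated_convergence hbound hfg (Eventually.of_forall hfb)
  simp only [(hf _).tsum_eq] at hlim
  rw [tendsto_nhds_unique hs hlim]
  refine (hbound.of_norm_bounded fun k => ?_).hasSum
  exact le_of_tendsto' (hfg k).norm fun n => hfb n k

theorem exists_hasSum_le_of_tendsto {α β : Type*} {l : Filter α} [l.NeBot] {f : α → β → ℝ}
    {g : β → ℝ} {b : α → ℝ} {c : ℝ} (hf0 : ∀ n k, 0 ≤ f n k)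
    (hf : ∀ n, ∃ t, HasSum (f n) t ∧ t ≤ b n) (hb : Tendsto b l (𝓝 c))
    (hfg : ∀ k, Tendsto (fun n => f n k) l (𝓝 (g k))) : ∃ t, HasSum g t ∧ t ≤ c := by
  have hg0 : 0 ≤ g := fun k => ge_of_tendsto' (hfg k) fun n => hf0 n k
  have hfin : ∀ u : Finset β, ∑ k ∈ u, g k ≤ c := fun u =>
    le_of_tendsto_of_tendsto' (tendsto_finsetSum u fun k _ => hfg k) hb fun n => by
      obtain ⟨t, ht, htb⟩ := hf n
      exact (sum_le_hasSum u (fun k _ => hf0 n k) ht).trans htb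
  exact ⟨_, (summable_of_sum_le hg0 hfin).hasSum, Real.tsum_le_of_sum_le hg0 hfin⟩

section Mixtures

variable {ι E F : Type*} [NormedAddCommGroup E] [NormedSpace ℝ E]

def mixtureLift (B : E → Set F) (τ : ι → E) (φ : ι → ℝ) : Set (F × ℝ × E) :=
  {q | ∃ μ : ι → ℝ, (∀ i, 0 ≤ μ i) ∧ HasSum μ 1 ∧ HasSum (fun i => μ i • τ i) q.2.2 ∧
    (∃ c, HasSum (fun i => μ i * φ i) c ∧ c ≤ q.2.1) ∧ q.1 ∈ B q.2.2}

variable {B : E → Set F} {τ : ι → E} {φ : ι → ℝ}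

theorem mk_mem_mixtureLift {i : ι} {u : F} (hu : u ∈ B (τ i)) :
    (u, φ i, τ i) ∈ mixtureLift B τ φ := by
  classical
  refine ⟨Pi.single i 1, fun j => by by_cases hj : j = i <;> simp [hj], hasSum_pi_single i 1, ?_,
    ⟨φ i, ?_, le_rfl⟩, hu⟩
  · simpa using hasSum_single (f := fun j => (Pi.single i (1 : ℝ) : ι → ℝ) j • τ j) i
      fun j hj => by simp [hj]
  · simpa using hasSum_single (f := fun j => (Pi.single i (1 : ℝ) : ι → ℝ) j * φ j) i
      fun j hj => by simp [hj]

variable [FiniteDimensional ℝ E] {C : Set E}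

theorem mixtureLift_subset (hC : Convex ℝ C) (hτ : ∀ i, τ i ∈ C) :
    mixtureLift B τ φ ⊆ {q | q.2.2 ∈ C ∧ q.1 ∈ B q.2.2} :=
  fun _ ⟨_, hμ0, hμ1, hμτ, _, hu⟩ => ⟨hC.mem_of_hasSum hμ0 hμ1 hτ hμτ, hu⟩

theorem convex_mixtureLift [AddCommGroup F] [Module ℝ F] (hC : Convex ℝ C)
    (hB : ConvexFamily C B) (hτ : ∀ i, τ i ∈ C) : Convex ℝ (mixtureLift B τ φ) := by
  rintro ⟨u, c, z⟩ ⟨μ, hμ0, hμ1, hμτ, ⟨s, hs, hsc⟩, hu⟩ ⟨u', c', z'⟩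
    ⟨μ', hμ0', hμ1', hμτ', ⟨s', hs', hsc'⟩, hu'⟩ a b ha hb hab
  have hz : z ∈ C := hC.mem_of_hasSum hμ0 hμ1 hτ hμτ
  have hz' : z' ∈ C := hC.mem_of_hasSum hμ0' hμ1' hτ hμτ'
  refine ⟨fun i => a * μ i + b * μ' i, fun i => ?_, ?_, ?_, ⟨a * s + b * s', ?_, ?_⟩, ?_⟩
  · have := hμ0 i; have := hμ0' i; positivity
  · simpa [hab] using (hμ1.mul_left a).add (hμ1'.mul_left b)
  · simpa [add_smul, mul_smul] using (hμτ.const_smul a).add (hμτ'.const_smul b)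
  · simpa [add_mul, mul_assoc] using (hs.mul_left a).add (hs'.mul_left b)
  · simp only [Prod.smul_mk, Prod.mk_add_mk, smul_eq_mul]
    gcongr
  · exact hB.2 z hz z' hz' a b ha hb hab
      (add_mem_add (smul_mem_smul_set hu) (smul_mem_smul_set hu'))

theorem isClosed_mixtureLift [TopologicalSpace F] [FirstCountableTopology F] [Countable ι]
    (hC : Convex ℝ C) (hB : ClosedFamily C B) (hτ : ∀ i, τ i ∈ C) (hφ0 : ∀ i, 0 < φ i)
    (hφ : Summable fun i => (1 + ‖τ i‖) / φ i) :
    IsClosed (mixtureLift B τ φ) := by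
  refine IsSeqClosed.isClosed fun q lim hq hlim => ?_
  choose μ hμ0 hμ1 hμτ hμφ hqB using hq
  have hc : Tendsto (fun m => (q m).2.1) atTop (𝓝 lim.2.1) :=
    ((continuous_fst.comp continuous_snd).tendsto lim).comp hlim
  have hz : Tendsto (fun m => (q m).2.2) atTop (𝓝 lim.2.2) :=
    ((continuous_snd.comp continuous_snd).tendsto lim).comp hlim
  have hu : Tendsto (fun m => (q m).1) atTop (𝓝 lim.1) := (continuous_fst.tendsto lim).comp hlim
  obtain ⟨K, hK⟩ := hc.bddAbove_range
  -- The cost bound `∑ μ i * φ i ≤ K` dominates every weight by a summable function.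
  have hdom : ∀ m i, μ m i * (1 + ‖τ i‖) ≤ K * ((1 + ‖τ i‖) / φ i) := by
    intro m i
    obtain ⟨s, hs, hsq⟩ := hμφ m
    have hcost : μ m i * φ i ≤ K := (le_hasSum hs i fun j _ => mul_nonneg (hμ0 m j)
      (hφ0 j).le).trans (hsq.trans (hK ⟨m, rfl⟩))
    rw [mul_div_assoc', le_div_iff₀ (hφ0 i)]
    nlinarith [norm_nonneg (τ i)]
  obtain ⟨P, -, σ, hσ, hP⟩ := (isCompact_univ_pi fun _ : ι => isCompact_Icc).tendsto_subseq
    (x := μ) fun m i _ => ⟨hμ0 m i, le_hasSum (hμ1 m) i fun j _ => hμ0 m j⟩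
  have hPi : ∀ i, Tendsto (fun m => μ (σ m) i) atTop (𝓝 (P i)) := tendsto_pi_nhds.1 hP
  have hbound : Summable fun i => K * ((1 + ‖τ i‖) / φ i) := hφ.mul_left K
  have hP0 : ∀ i, 0 ≤ P i := fun i => ge_of_tendsto' (hPi i) fun m => hμ0 _ i
  have hP1 : HasSum P 1 := hasSum_of_tendsto_of_dominated (fun m => hμ1 (σ m))
    tendsto_const_nhds hbound hPi fun m i => by
      rw [Real.norm_of_nonneg (hμ0 _ i)]
      nlinarith [hdom (σ m) i, hμ0 (σ m) i, norm_nonneg (τ i)]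
  have hPτ : HasSum (fun i => P i • τ i) lim.2.2 := hasSum_of_tendsto_of_dominated
    (fun m => hμτ (σ m)) (hz.comp hσ.tendsto_atTop) hbound (fun i => (hPi i).smul_const _)
    fun m i => by
      rw [norm_smul, Real.norm_of_nonneg (hμ0 _ i)]
      nlinarith [hdom (σ m) i, hμ0 (σ m) i]
  refine ⟨P, hP0, hP1, hPτ, exists_hasSum_le_of_tendsto
    (fun m i => mul_nonneg (hμ0 (σ m) i) (hφ0 i).le) (fun m => hμφ (σ m))
    (hc.comp hσ.tendsto_atTop) fun i => (hPi i).mul_const _, ?_⟩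
  exact hB.2 _ _ _ _ (fun m => hC.mem_of_hasSum (hμ0 _) (hμ1 _) hτ (hμτ _)) (fun m => hqB _)
    (hC.mem_of_hasSum hP0 hP1 hτ hPτ) (hz.comp hσ.tendsto_atTop) (hu.comp hσ.tendsto_atTop)

end Mixtures

section Slices

variable {X Y Z : Type*}

theorem convexFamily_slices [AddCommGroup X] [Module ℝ X] [AddCommGroup Y] [Module ℝ Y]
    [AddCommGroup Z] [Module ℝ Z] {M : Set (X × Y × Z)} (hM : Convex ℝ M) :
    ConvexFamily univ fun z => {w : X × Y | (w.1, w.2, z) ∈ M} := by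
  have hcomb : ∀ (z z' : Z) (a b : ℝ), 0 ≤ a → 0 ≤ b → a + b = 1 →
      a • {w : X × Y | (w.1, w.2, z) ∈ M} + b • {w : X × Y | (w.1, w.2, z') ∈ M} ⊆
        {w : X × Y | (w.1, w.2, a • z + b • z') ∈ M} := by
    rintro z z' a b ha hb hab _ ⟨_, ⟨w, hw, rfl⟩, _, ⟨w', hw', rfl⟩, rfl⟩
    simpa using hM hw hw' ha hb hab
  refine ⟨fun z _ w hw w' hw' a b ha hb hab => ?_, fun z _ z' _ => hcomb z z'⟩
  simpa [Convex.combo_self hab] using hcomb z z a b ha hb hab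
    (add_mem_add (smul_mem_smul_set hw) (smul_mem_smul_set hw'))

theorem closedFamily_slices [TopologicalSpace X] [TopologicalSpace Y] [TopologicalSpace Z]
    {M : Set (X × Y × Z)} (hM : IsClosed M) :
    ClosedFamily univ fun z => {w : X × Y | (w.1, w.2, z) ∈ M} := by
  refine ⟨fun z _ => hM.preimage (by fun_prop), fun zs xs z x _ hxs _ hz hx => ?_⟩
  have hx₁ := (continuous_fst.tendsto x).comp hx
  have hx₂ := (continuous_snd.tendsto x).comp hx
  exact hM.mem_of_tendsto (hx₁.prodMk_nhds (hx₂.prodMk_nhds hz)) (Eventually.of_forall hxs)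

end Slices

theorem countable_setOf_isIntegerVec {d : ℕ} : {z : Fin d → ℝ | IsIntegerVec z}.Countable := by
  refine (countable_range fun (m : Fin d → ℤ) i => (m i : ℝ)).mono fun z hz => ?_
  choose m hm using hz
  exact ⟨m, funext fun i => (hm i).symm⟩

theorem micpRepresentable_of_closedConvexFamily {n d p : ℕ} {C : Set (Fin d → ℝ)}
    {B : (Fin d → ℝ) → Set ((Fin n → ℝ) × (Fin p → ℝ))} (hC : Convex ℝ C)
    (hBc : ConvexFamily C B) (hBl : ClosedFamily C B) :
    MICPRepresentable (⋃ z ∈ {z ∈ C | IsIntegerVec z}, Prod.fst '' B z) := by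
  set T := {z ∈ C | IsIntegerVec z}
  have hT : T.Countable := countable_setOf_isIntegerVec.mono fun _ hz => hz.2
  have := hT.to_subtype
  obtain ⟨ε, hε0, _, hε, -⟩ := hT.exists_pos_hasSum_le one_pos
  set φ : T → ℝ := fun z => (1 + ‖(z : Fin d → ℝ)‖) / ε z
  have hφ0 : ∀ z, 0 < φ z := fun z => div_pos (by positivity) (hε0 z)
  have hφ : Summable fun z : T => (1 + ‖(z : Fin d → ℝ)‖) / φ z :=
    hε.summable.congr fun z => (div_div_cancel₀ (by positivity)).symm
  -- The cost coordinate of the lift becomes the first of the continuous coordinates.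
  let e : (Fin n → ℝ) × (Fin (p + 1) → ℝ) × (Fin d → ℝ) →
      ((Fin n → ℝ) × (Fin p → ℝ)) × ℝ × (Fin d → ℝ) :=
    fun q => ((q.1, Fin.tail q.2.1), q.2.1 0, q.2.2)
  have hτ : ∀ z : T, (z : Fin d → ℝ) ∈ C := fun z => z.2.1
  have he : Continuous e := by fun_prop
  refine ⟨p + 1, d, e ⁻¹' mixtureLift B Subtype.val φ,
    (isClosed_mixtureLift hC hBl hτ hφ0 hφ).preimage he,
    (convex_mixtureLift hC hBc hτ).is_linear_preimage ⟨fun _ _ => rfl, fun _ _ => rfl⟩, ?_⟩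
  ext x
  simp only [mem_iUnion, mem_image]
  constructor
  · rintro ⟨z, hzT, w, hw, rfl⟩
    refine ⟨Fin.cons (φ ⟨z, hzT⟩) w.2, z, hzT.2, ?_⟩
    simpa [e] using mk_mem_mixtureLift (φ := φ) (i := (⟨z, hzT⟩ : T)) hw
  · rintro ⟨y, z, hz, hq⟩
    obtain ⟨hzC, hzB⟩ := mixtureLift_subset hC hτ hq
    exact ⟨z, ⟨hzC, hz⟩, _, hzB, rfl⟩

theorem stmt9 {n : ℕ} (S : Set (Fin n → ℝ)) :
    MICPRepresentable S ↔
      ∃ (d p : ℕ) (C : Set (Fin d → ℝ))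
        (B : (Fin d → ℝ) → Set ((Fin n → ℝ) × (Fin p → ℝ))),
        Convex ℝ C ∧ ConvexFamily C B ∧ ClosedFamily C B ∧
        S = ⋃ z ∈ {z ∈ C | IsIntegerVec z}, Prod.fst '' B z := by
  constructor
  · rintro ⟨p, d, M, hMc, hMv, rfl⟩
    refine ⟨d, p, univ, fun z => {w | (w.1, w.2, z) ∈ M}, convex_univ, convexFamily_slices hMv,
      closedFamily_slices hMc, ?_⟩
    ext x
    simp only [mem_iUnion, mem_image, mem_univ, true_and, exists_prop]
    exact ⟨fun ⟨y, z, hz, h⟩ => ⟨z, hz, (x, y), h, rfl⟩,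
      fun ⟨z, hz, w, hw, hwx⟩ => ⟨w.2, z, hz, hwx ▸ hw⟩⟩
  · rintro ⟨d, p, C, B, hC, hBc, hBl, rfl⟩
    exact micpRepresentable_of_closedConvexFamily hC hBc hBl
end

section
/- A subset S ⊆ ℕ is rational-MILP representable (i.e., S = {b₁,…,bₙ} + intcone(z₁,…,z_r) for natural numbers bᵢ and positive integers zⱼ, or S is finite) if and only if S is a union of finitely many infinite arithmetic progressions with a common step size, or a finite set. -/
/-- `S ⊆ ℕ` is rational-MILP representable: it is finite, or a Minkowski sum of a
finite nonempty set of offsets with the integral cone of finitely many positive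
integers. -/
def RatMILPRepresentable (S : Set ℕ) : Prop :=
  S.Finite ∨
  ∃ (nn r : ℕ) (b : Fin nn → ℕ) (z : Fin r → ℕ), 0 < nn ∧ (∀ j, 0 < z j) ∧
    S = {x | ∃ (i : Fin nn) (lam : Fin r → ℕ), x = b i + ∑ j, lam j * z j}

/-- A nonempty set closed under adding `a` is a finite union of APs of step `a`. -/
lemma aux_ap (S : Set ℕ) (a : ℕ) (ha : 0 < a) (hne : S.Nonempty)
    (hcl : ∀ x ∈ S, x + a ∈ S) :
    ∃ (k : ℕ) (off : Fin k → ℕ), S = ⋃ i, {x | ∃ m : ℕ, x = a * m + off i} := by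
  classical
  obtain ⟨x₀, hx₀⟩ := hne
  have hiter : ∀ x ∈ S, ∀ m : ℕ, x + a * m ∈ S := by
    intro x hx m
    induction m with
    | zero => simpa using hx
    | succ n ih =>
      have := hcl _ ih
      have h : x + a * (n + 1) = x + a * n + a := by ring
      rwa [h]
  set T : ℕ → Set ℕ := fun c => {x | x ∈ S ∧ x % a = c} with hT
  refine ⟨a, fun c => if (T c.val).Nonempty then sInf (T c.val) else x₀, ?_⟩
  ext x
  simp only [Set.mem_iUnion, Set.mem_setOf_eq]
  constructor
  · intro hx
    have hc : (x % a) < a := Nat.mod_lt _ ha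
    refine ⟨⟨x % a, hc⟩, ?_⟩
    show ∃ m, x = a * m + (if (T (x % a)).Nonempty then sInf (T (x % a)) else x₀)
    have hne' : (T (x % a)).Nonempty := ⟨x, hx, rfl⟩
    rw [if_pos hne']
    have hmem : sInf (T (x % a)) ∈ T (x % a) := Nat.sInf_mem hne'
    have hle : sInf (T (x % a)) ≤ x := Nat.sInf_le ⟨hx, rfl⟩
    have hmod : sInf (T (x % a)) % a = x % a := hmem.2
    have hdvd : a ∣ x - sInf (T (x % a)) := by
      have : sInf (T (x % a)) ≡ x [MOD a] := by
        unfold Nat.ModEq; omega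
      exact (Nat.modEq_iff_dvd' hle).mp this
    obtain ⟨m, hm⟩ := hdvd
    exact ⟨m, by omega⟩
  · rintro ⟨c, m, rfl⟩
    by_cases h : (T c.val).Nonempty
    · rw [if_pos h]
      have hmem : sInf (T c.val) ∈ T c.val := Nat.sInf_mem h
      have := hiter _ hmem.1 m
      rwa [Nat.add_comm]
    · rw [if_neg h]
      have := hiter _ hx₀ m
      rwa [Nat.add_comm]

theorem stmt11 (S : Set ℕ) :
    RatMILPRepresentable S ↔
      (S.Finite ∨
        ∃ (a : ℕ), 0 < a ∧ ∃ (k : ℕ) (off : Fin k → ℕ),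
          S = ⋃ i, {x | ∃ m : ℕ, x = a * m + off i}) := by
  constructor
  · rintro (hfin | ⟨nn, r, b, z, hnn, hz, rfl⟩)
    · exact Or.inl hfin
    · rcases Nat.eq_zero_or_pos r with hr | hr
      · subst hr
        left
        have : {x | ∃ (i : Fin nn) (lam : Fin 0 → ℕ), x = b i + ∑ j, lam j * z j}
            = Set.range b := by
          ext x
          simp [eq_comm]
        rw [this]
        exact Set.finite_range b
      · right
        set j₀ : Fin r := ⟨0, hr⟩
        refine ⟨z j₀, hz j₀, ?_⟩
        apply aux_ap _ _ (hz j₀)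
        · exact ⟨b ⟨0, hnn⟩, ⟨⟨0, hnn⟩, fun _ => 0, by simp⟩⟩
        · rintro x ⟨i, lam, rfl⟩
          refine ⟨i, fun j => lam j + if j = j₀ then 1 else 0, ?_⟩
          have : ∑ j, (lam j + if j = j₀ then 1 else 0) * z j
              = (∑ j, lam j * z j) + z j₀ := by
            rw [Finset.sum_congr rfl (fun j _ => add_mul (lam j) _ (z j)),
              Finset.sum_add_distrib]
            congr 1
            simp
          rw [this]
          ring
  · rintro (hfin | ⟨a, ha, k, off, rfl⟩)
    · exact Or.inl hfin
    · rcases Nat.eq_zero_or_pos k with hk | hk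
      · subst hk
        left
        convert Set.finite_empty
        ext x
        simp only [Set.mem_iUnion, Set.mem_empty_iff_false, iff_false, not_exists]
        exact fun i => i.elim0
      · right
        refine ⟨k, 1, off, fun _ => a, hk, fun _ => ha, ?_⟩
        ext x
        simp only [Set.mem_iUnion, Set.mem_setOf_eq]
        constructor
        · rintro ⟨i, m, rfl⟩
          exact ⟨i, fun _ => m, by simp [Fin.sum_univ_one]; ring⟩
        · rintro ⟨i, lam, rfl⟩
          exact ⟨i, lam 0, by simp [Fin.sum_univ_one]; ring⟩
end

section
/- Let I ⊆ ℕ be closed under addition and generated (as an additive monoid) by finitely many coprime positive integers. Then there exists N ∈ ℕ such that every natural number n ≥ N belongs to I. -/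
/-- Bézout for finsets in ℕ via ℤ coefficients. -/
lemma bezout_finset {ι : Type*} [DecidableEq ι] (s : Finset ι) (z : ι → ℕ) :
    ∃ c : ι → ℤ, (↑(s.gcd z) : ℤ) = ∑ i ∈ s, c i * z i := by
  induction s using Finset.induction with
  | empty => exact ⟨fun _ => 0, by simp⟩
  | @insert a s ha ih =>
    obtain ⟨c, hc⟩ := ih
    refine ⟨fun i => if i = a then Nat.gcdA (z a) (s.gcd z)
      else Nat.gcdB (z a) (s.gcd z) * c i, ?_⟩
    rw [Finset.gcd_insert, Finset.sum_insert ha]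
    have hgab := Nat.gcd_eq_gcd_ab (z a) (s.gcd z)
    have : (↑(Nat.gcd (z a) (s.gcd z)) : ℤ)
        = Nat.gcdA (z a) (s.gcd z) * z a + Nat.gcdB (z a) (s.gcd z) * (↑(s.gcd z) : ℤ) := by
      rw [hgab]; ring
    rw [show gcd (z a) (s.gcd z) = Nat.gcd (z a) (s.gcd z) from rfl]
    rw [this, hc, Finset.mul_sum]
    simp only [if_pos rfl]
    congr 1
    apply Finset.sum_congr rfl
    intro i hi
    rw [if_neg (fun (h : i = a) => ha (h ▸ hi))]
    ring

theorem stmt13 (r : ℕ) (z : Fin r → ℕ) (hpos : ∀ j, 0 < z j)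
    (hcop : Finset.univ.gcd z = 1) :
    ∃ N : ℕ, ∀ n ≥ N, ∃ lam : Fin r → ℕ, n = ∑ j, lam j * z j := by
  clear hpos
  obtain ⟨c, hc⟩ := bezout_finset Finset.univ z
  rw [hcop] at hc
  set A : Fin r → ℕ := fun j => (c j).toNat with hA
  set B : Fin r → ℕ := fun j => (-c j).toNat with hB
  have hAB : ∀ j, (A j : ℤ) - B j = c j := by
    intro j
    simp only [hA, hB]
    rcases le_or_gt 0 (c j) with h | h
    · rw [Int.toNat_of_nonneg h, Int.toNat_of_nonpos (by omega)]; ring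
    · rw [Int.toNat_of_nonpos (by omega), Int.toNat_of_nonneg (by omega)]; ring
  set a : ℕ := ∑ j, A j * z j with ha
  set b : ℕ := ∑ j, B j * z j with hb
  have hab : a = b + 1 := by
    have : (a : ℤ) - b = 1 := by
      rw [ha, hb]
      push_cast
      rw [← Finset.sum_sub_distrib]
      have h2 : ∑ x, ((A x : ℤ) * z x - B x * z x) = ∑ x, c x * z x :=
        Finset.sum_congr rfl fun j _ => by rw [← hAB j]; ring
      rw [h2, ← hc]; norm_num
    omega
  refine ⟨b * b, fun n hn => ?_⟩
  rcases Nat.eq_zero_or_pos b with hb0 | hb0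
  · refine ⟨fun j => n * A j, ?_⟩
    have h1 : a = 1 := by omega
    calc n = n * a := by rw [h1, mul_one]
    _ = n * ∑ j, A j * z j := by rw [ha]
    _ = ∑ j, n * A j * z j := by rw [Finset.mul_sum]; simp [mul_assoc]
  · set q := n / b with hq
    set s := n % b with hs
    have hsb : s < b := Nat.mod_lt _ hb0
    have hqs : s ≤ q := by
      have h1 : q * b + s = n := by rw [hq, hs, mul_comm]; exact Nat.div_add_mod n b
      nlinarith
    refine ⟨fun j => (q - s) * B j + s * A j, ?_⟩
    have : ∑ j, ((q - s) * B j + s * A j) * z j = (q - s) * b + s * a := by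
      rw [ha, hb, Finset.mul_sum, Finset.mul_sum, ← Finset.sum_add_distrib]
      apply Finset.sum_congr rfl
      intro j _
      ring
    rw [this, hab]
    have h1 : q * b + s = n := by rw [hq, hs, mul_comm]; exact Nat.div_add_mod n b
    have : (q - s) * b + s * (b + 1) = q * b + s := by
      rw [Nat.sub_mul]
      have : s * b ≤ q * b := Nat.mul_le_mul_right _ hqs
      rw [Nat.mul_add, mul_one]
      omega
    omega
end

section
/- Every set S ⊆ ℝⁿ of the form S = ⋃_{i=1}^k proj_x(T_i), where T₁,…,T_k ⊆ ℝ^(n+p) are nonempty closed convex sets, is bounded MICP representable: there exists a closed convex set M in a higher-dimensional space and finitely many feasible integer assignments such that S is the projection of the mixed-integer points of M. -/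
/-!
Let `z ∈ ℤᵏ` select the piece. Each `T i` is homogenised into its closed conic hull, and the copy
`(xᵢ, yᵢ)` is required to lie in it at height `zᵢ`, with `x = ∑ xᵢ` and `z` in the standard
simplex; all constraints are convex cones or affine, so the lifted set is closed and convex. Its
integer points have `z = eⱼ`: at height `1` the conic hull gives back `T j`, while at height `0` it
only gives the recession cone, so the rotated-cone constraints `(xᵢ)_c² ≤ zᵢ (sᵢ)_c` are added to
force `xᵢ = 0` there. Finitely many `z` occur, and `x = xⱼ ∈ proj T j`.
-/

open Set Filter Topology

section ClosedConicHull

variable {E : Type*} [AddCommGroup E] [Module ℝ E]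

def closedConicHull [TopologicalSpace E] (T : Set E) : Set (E × ℝ) :=
  closure {q | 0 < q.2 ∧ q.2⁻¹ • q.1 ∈ T}

lemma setOf_pos_inv_smul_mem_eq_hull {T : Set E} (hT : Convex ℝ T) :
    {q : E × ℝ | 0 < q.2 ∧ q.2⁻¹ • q.1 ∈ T} = ConvexCone.hull ℝ (T ×ˢ {(1 : ℝ)}) := by
  rw [ConvexCone.coe_hull_of_convex (hT.prod (convex_singleton 1))]
  ext ⟨v, t⟩
  simp only [mem_ofPred_eq, mem_smul_set, mem_prod, mem_singleton_iff, Prod.exists,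
    Prod.smul_mk, Prod.mk.injEq, smul_eq_mul]
  constructor
  · rintro ⟨ht, hv⟩
    exact ⟨t, ht, t⁻¹ • v, 1, ⟨hv, rfl⟩, by simp [smul_smul, ht.ne'], mul_one t⟩
  · rintro ⟨r, hr, w, _, ⟨hw, rfl⟩, rfl, rfl⟩
    simpa [smul_smul, hr.ne', hr] using hw

variable [TopologicalSpace E]

lemma isClosed_closedConicHull (T : Set E) : IsClosed (closedConicHull T) := isClosed_closure

lemma Convex.closedConicHull [IsTopologicalAddGroup E] [ContinuousConstSMul ℝ E] {T : Set E}
    (hT : Convex ℝ T) : Convex ℝ (closedConicHull T) := by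
  unfold _root_.closedConicHull
  rw [setOf_pos_inv_smul_mem_eq_hull hT]
  exact (ConvexCone.convex _).closure

lemma zero_mem_closedConicHull [ContinuousSMul ℝ E] {T : Set E} (hT : T.Nonempty) :
    (0 : E × ℝ) ∈ closedConicHull T := by
  obtain ⟨v, hv⟩ := hT
  have hlim : Tendsto (fun c : ℝ => c • (v, (1 : ℝ))) (𝓝[>] 0) (𝓝 0) := by
    simpa using (tendsto_nhdsWithin_of_tendsto_nhds
      ((continuous_id.smul continuous_const).tendsto (0 : ℝ)) :
      Tendsto (fun c : ℝ => c • (v, (1 : ℝ))) (𝓝[>] 0) (𝓝 ((0 : ℝ) • (v, (1 : ℝ)))))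
  refine mem_closure_of_tendsto hlim (eventually_nhdsWithin_of_forall fun c (hc : 0 < c) => ?_)
  simpa [hc, smul_smul, hc.ne'] using hv

lemma inv_smul_mem_of_mem_closedConicHull [ContinuousSMul ℝ E] {T : Set E} (hT : IsClosed T)
    {v : E} {t : ℝ} (h : (v, t) ∈ closedConicHull T) (ht : t ≠ 0) : t⁻¹ • v ∈ T := by
  have hcont : ContinuousWithinAt (fun q : E × ℝ => q.2⁻¹ • q.1)
      {q | 0 < q.2 ∧ q.2⁻¹ • q.1 ∈ T} (v, t) :=
    ((continuous_snd.continuousAt.inv₀ ht).smul continuous_fst.continuousAt).continuousWithinAt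
  exact hT.closure_subset_iff.2 (image_subset_iff.2 fun q hq => hq.2) (hcont.mem_closure_image h)

lemma mk_one_mem_closedConicHull {T : Set E} {v : E} (h : v ∈ T) : (v, 1) ∈ closedConicHull T :=
  subset_closure ⟨one_pos, by simpa using h⟩

end ClosedConicHull

def rotatedCone : Set (ℝ × ℝ × ℝ) := {q | 0 ≤ q.2.1 ∧ 0 ≤ q.2.2 ∧ q.1 ^ 2 ≤ q.2.1 * q.2.2}

lemma isClosed_rotatedCone : IsClosed rotatedCone := by
  simp only [rotatedCone, ofPred_and]
  exact (isClosed_le continuous_const (by fun_prop)).inter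
    ((isClosed_le continuous_const (by fun_prop)).inter (isClosed_le (by fun_prop) (by fun_prop)))

lemma convex_rotatedCone : Convex ℝ rotatedCone := by
  rintro ⟨u₁, s₁, t₁⟩ ⟨hs₁, ht₁, h₁⟩ ⟨u₂, s₂, t₂⟩ ⟨hs₂, ht₂, h₂⟩ a b ha hb -
  simp only [rotatedCone, mem_ofPred_eq, Prod.smul_mk, Prod.mk_add_mk, smul_eq_mul] at *
  -- AM-GM: `(u₁ u₂)² ≤ (s₁ t₂) (s₂ t₁) ≤ ((s₁ t₂ + s₂ t₁) / 2)²`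
  have cross : 2 * (u₁ * u₂) ≤ s₁ * t₂ + s₂ * t₁ := by
    nlinarith [sq_nonneg (s₁ * t₂ - s₂ * t₁), mul_le_mul h₁ h₂ (sq_nonneg _) (mul_nonneg hs₁ ht₁),
      mul_nonneg hs₁ ht₂, mul_nonneg hs₂ ht₁]
  refine ⟨by positivity, by positivity, ?_⟩
  nlinarith [mul_le_mul_of_nonneg_left h₁ (sq_nonneg a), mul_le_mul_of_nonneg_left h₂ (sq_nonneg b),
    mul_le_mul_of_nonneg_left cross (mul_nonneg ha hb)]

section Flatten

variable {X W Z : Type*} [AddCommGroup X] [Module ℝ X] [TopologicalSpace X]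
  [AddCommGroup Z] [Module ℝ Z] [TopologicalSpace Z]
  [NormedAddCommGroup W] [NormedSpace ℝ W] [FiniteDimensional ℝ W]

lemma exists_isClosed_convex_fin_of_finiteDimensional (M₀ : Set (X × W × Z)) (hcl : IsClosed M₀)
    (hconv : Convex ℝ M₀) :
    ∃ (q : ℕ) (M : Set (X × (Fin q → ℝ) × Z)), IsClosed M ∧ Convex ℝ M ∧
      ∀ x z, (∃ y, (x, y, z) ∈ M) ↔ ∃ w, (x, w, z) ∈ M₀ := by
  let e := (Module.finBasis ℝ W).equivFun
  let Φ : X × (Fin _ → ℝ) × Z →ₗ[ℝ] X × W × Z :=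
    LinearMap.prodMap LinearMap.id (LinearMap.prodMap e.symm.toLinearMap LinearMap.id)
  have he : Continuous e.symm := LinearMap.continuous_of_finiteDimensional e.symm.toLinearMap
  refine ⟨_, Φ ⁻¹' M₀, hcl.preimage (continuous_id.prodMap (he.prodMap continuous_id)),
    hconv.linear_preimage Φ, fun x z => ⟨fun ⟨y, h⟩ => ⟨_, h⟩, fun ⟨w, h⟩ => ⟨e w, ?_⟩⟩⟩
  simpa [Φ] using h

end Flatten

section DisjunctiveFormulation

variable {ι F : Type*} [AddCommGroup F] [Module ℝ F] [TopologicalSpace F] {k : ℕ}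

/-- A point is `(x, w, z)` with `w i = ((xᵢ, yᵢ), sᵢ)` in the notation of the closed conic hull
formulation. -/
def disjunctiveFormulation (T : Fin k → Set ((ι → ℝ) × F)) :
    Set ((ι → ℝ) × (Fin k → ((ι → ℝ) × F) × (ι → ℝ)) × (Fin k → ℝ)) :=
  {m | m.2.2 ∈ stdSimplex ℝ (Fin k) ∧ m.1 = ∑ i, (m.2.1 i).1.1 ∧
    (∀ i, ((m.2.1 i).1, m.2.2 i) ∈ closedConicHull (T i)) ∧
    ∀ i c, ((m.2.1 i).1.1 c, m.2.2 i, (m.2.1 i).2 c) ∈ rotatedCone}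

lemma isClosed_disjunctiveFormulation (T : Fin k → Set ((ι → ℝ) × F)) :
    IsClosed (disjunctiveFormulation T) := by
  simp only [disjunctiveFormulation, ofPred_and, ofPred_forall]
  exact ((isClosed_stdSimplex ℝ (Fin k)).preimage (by fun_prop)).inter
    ((isClosed_eq (by fun_prop) (by fun_prop)).inter
      ((isClosed_iInter fun i => (isClosed_closedConicHull _).preimage (by fun_prop)).inter
        (isClosed_iInter fun i => isClosed_iInter fun c =>
          isClosed_rotatedCone.preimage (by fun_prop))))

lemma convex_disjunctiveFormulation [IsTopologicalAddGroup F] [ContinuousSMul ℝ F]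
    {T : Fin k → Set ((ι → ℝ) × F)} (hconv : ∀ i, Convex ℝ (T i)) :
    Convex ℝ (disjunctiveFormulation T) := by
  rintro m₁ ⟨hz₁, hx₁, hT₁, hr₁⟩ m₂ ⟨hz₂, hx₂, hT₂, hr₂⟩ a b ha hb hab
  refine ⟨convex_stdSimplex ℝ (Fin k) hz₁ hz₂ ha hb hab, ?_,
    fun i => (hconv i).closedConicHull (hT₁ i) (hT₂ i) ha hb hab,
    fun i c => convex_rotatedCone (hr₁ i c) (hr₂ i c) ha hb hab⟩
  simp [hx₁, hx₂, Finset.smul_sum, Finset.sum_add_distrib]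

lemma mem_disjunctiveFormulation_single [IsTopologicalAddGroup F] [ContinuousSMul ℝ F]
    {T : Fin k → Set ((ι → ℝ) × F)} (hne : ∀ i, (T i).Nonempty) {j : Fin k} {x : ι → ℝ} {y : F}
    (hxy : (x, y) ∈ T j) :
    (x, Pi.single j ((x, y), x ^ 2), Pi.single j 1) ∈ disjunctiveFormulation T := by
  refine ⟨single_mem_stdSimplex ℝ j, ?_, fun i => ?_, fun i c => ?_⟩
  · rw [Fintype.sum_eq_single j fun i hij => by simp [hij]]
    simp
  · rcases eq_or_ne i j with rfl | hij
    · simpa using mk_one_mem_closedConicHull hxy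
    · simpa [hij, Prod.zero_eq_mk] using zero_mem_closedConicHull (hne i)
  · rcases eq_or_ne i j with rfl | hij
    · simp [rotatedCone, sq_nonneg]
    · simp [rotatedCone, hij]

lemma mem_image_fst_of_mem_disjunctiveFormulation_single [ContinuousSMul ℝ F]
    {T : Fin k → Set ((ι → ℝ) × F)} (hcl : ∀ i, IsClosed (T i)) {x : ι → ℝ}
    {w : Fin k → ((ι → ℝ) × F) × (ι → ℝ)} {j : Fin k}
    (h : (x, w, Pi.single j 1) ∈ disjunctiveFormulation T) : x ∈ Prod.fst '' T j := by
  obtain ⟨-, hx, hT, hr⟩ := h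
  have hvanish : ∀ i ≠ j, (w i).1.1 = 0 := fun i hij => funext fun c => by
    simpa [hij] using (hr i c).2.2
  rw [Fintype.sum_eq_single j hvanish] at hx
  exact ⟨(w j).1, by simpa using inv_smul_mem_of_mem_closedConicHull (hcl j) (hT j) (by simp),
    hx.symm⟩

end DisjunctiveFormulation

lemma exists_eq_single_of_isIntegerVec_of_mem_stdSimplex {k : ℕ} {z : Fin k → ℝ}
    (hint : IsIntegerVec z) (hz : z ∈ stdSimplex ℝ (Fin k)) : ∃ j, z = Pi.single j 1 := by
  obtain ⟨hnonneg, hsum⟩ := hz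
  obtain ⟨j, -, hj⟩ := Finset.exists_ne_zero_of_sum_ne_zero (hsum.trans_ne one_ne_zero)
  have hzj : z j = 1 := by
    obtain ⟨m, hm⟩ := hint j
    refine le_antisymm (hsum ▸ Finset.single_le_sum (fun i _ => hnonneg i) (Finset.mem_univ j)) ?_
    have hpos := (hnonneg j).lt_of_ne' hj
    rw [hm] at hpos ⊢
    exact Int.cast_one_le_of_pos (Int.cast_pos.1 hpos)
  refine ⟨j, funext fun i => ?_⟩
  rcases eq_or_ne i j with rfl | hij
  · simpa using hzj
  · have : z i + z j ≤ 1 :=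
      hsum ▸ Finset.add_le_sum (fun i _ => hnonneg i) (Finset.mem_univ i) (Finset.mem_univ j) hij
    rw [Pi.single_eq_of_ne hij]
    linarith [hnonneg i]

lemma isIntegerVec_single {k : ℕ} (j : Fin k) : IsIntegerVec (Pi.single j (1 : ℝ)) := fun i =>
  ⟨if i = j then 1 else 0, by simp [Pi.single_apply]⟩

theorem stmt18 {n p k : ℕ} (T : Fin k → Set ((Fin n → ℝ) × (Fin p → ℝ)))
    (hne : ∀ i, (T i).Nonempty) (hcl : ∀ i, IsClosed (T i))
    (hconv : ∀ i, Convex ℝ (T i)) :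
    ∃ (q d : ℕ) (M : Set ((Fin n → ℝ) × (Fin q → ℝ) × (Fin d → ℝ))),
      IsClosed M ∧ Convex ℝ M ∧
      (⋃ i, Prod.fst '' T i) =
        {x | ∃ (y : Fin q → ℝ) (z : Fin d → ℝ), IsIntegerVec z ∧ (x, y, z) ∈ M} ∧
      {z : Fin d → ℝ | IsIntegerVec z ∧ ∃ x y, (x, y, z) ∈ M}.Finite := by
  obtain ⟨q, M, hMcl, hMconv, hM⟩ := exists_isClosed_convex_fin_of_finiteDimensional
    (disjunctiveFormulation T) (isClosed_disjunctiveFormulation T)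
    (convex_disjunctiveFormulation hconv)
  refine ⟨q, k, M, hMcl, hMconv, ext fun x => ⟨?_, ?_⟩, ?_⟩
  · rintro ⟨_, ⟨j, rfl⟩, ⟨x, y⟩, hxy, rfl⟩
    obtain ⟨y', hy'⟩ := (hM _ _).2 ⟨_, mem_disjunctiveFormulation_single hne hxy⟩
    exact ⟨y', _, isIntegerVec_single j, hy'⟩
  · rintro ⟨y, z, hz, hm⟩
    obtain ⟨w, hw⟩ := (hM x z).1 ⟨y, hm⟩
    obtain ⟨j, rfl⟩ := exists_eq_single_of_isIntegerVec_of_mem_stdSimplex hz hw.1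
    exact mem_iUnion.2 ⟨j, mem_image_fst_of_mem_disjunctiveFormulation_single hcl hw⟩
  · refine (finite_range fun j : Fin k => (Pi.single j 1 : Fin k → ℝ)).subset ?_
    rintro z ⟨hz, x, y, hm⟩
    obtain ⟨w, hw⟩ := (hM x z).1 ⟨y, hm⟩
    obtain ⟨j, rfl⟩ := exists_eq_single_of_isIntegerVec_of_mem_stdSimplex hz hw.1
    exact ⟨j, rfl⟩
end

section
/- Let M = C + K ⊆ ℝ^(n+p+d) where C is a compact convex set and K is a polyhedral cone generated by finitely many integer vectors (r¹,…,rᵗ) ⊆ ℤ^(n+p+d). Then M ∩ (ℝ^(n+p) × ℤᵈ) = M̂ + M^∞, where M̂ = (C + B) ∩ (ℝ^(n+p) × ℤᵈ) with B = {Σⱼ γⱼ rʲ : 0 ≤ γⱼ ≤ 1}, and M^∞ = intcone(r¹,…,rᵗ) = {Σⱼ λⱼ rʲ : λⱼ ∈ ℕ}. -/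
open Pointwise

theorem stmt19 {np d t : ℕ}
    (C : Set ((Fin np → ℝ) × (Fin d → ℝ))) (hCcompact : IsCompact C) (hCconv : Convex ℝ C)
    (r : Fin t → (Fin np → ℝ) × (Fin d → ℝ))
    (hint : ∀ j, (∀ i, ∃ m : ℤ, (r j).1 i = (m : ℝ)) ∧ IsIntegerVec (r j).2) :
    (C + {v | ∃ γ : Fin t → ℝ, (∀ j, 0 ≤ γ j) ∧ v = ∑ j, γ j • r j}) ∩
        {v : (Fin np → ℝ) × (Fin d → ℝ) | IsIntegerVec v.2} =
      ((C + {v | ∃ γ : Fin t → ℝ, (∀ j, 0 ≤ γ j ∧ γ j ≤ 1) ∧ v = ∑ j, γ j • r j}) ∩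
          {v : (Fin np → ℝ) × (Fin d → ℝ) | IsIntegerVec v.2}) +
        {v | ∃ lam : Fin t → ℕ, v = ∑ j, (lam j : ℝ) • r j} := by
  ext x
  simp only [Set.mem_inter_iff, Set.mem_add, Set.mem_setOf_eq]
  constructor
  · rintro ⟨⟨c, hc, k, ⟨γ, hγ, rfl⟩, rfl⟩, hxint⟩
    have hfl : ∀ j, (((⌊γ j⌋).toNat : ℕ) : ℝ) = (⌊γ j⌋ : ℝ) := by
      intro j
      rw [← Int.cast_natCast, Int.toNat_of_nonneg (Int.floor_nonneg.2 (hγ j))]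
    refine ⟨c + ∑ j, Int.fract (γ j) • r j,
      ⟨⟨c, hc, ∑ j, Int.fract (γ j) • r j,
        ⟨fun j => Int.fract (γ j), fun j => ⟨Int.fract_nonneg _, (Int.fract_lt_one _).le⟩, rfl⟩,
        rfl⟩, ?_⟩,
      ∑ j, (((⌊γ j⌋).toNat : ℕ) : ℝ) • r j, ⟨fun j => (⌊γ j⌋).toNat, rfl⟩, ?_⟩
    · intro i
      obtain ⟨m, hm⟩ := hxint i
      choose mr hmr using fun j => (hint j).2 i
      refine ⟨m - ∑ j, ⌊γ j⌋ * mr j, ?_⟩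
      have h2 : (c + ∑ j, γ j • r j).2 i = (m : ℝ) := hm
      simp only [Prod.snd_add, Prod.snd_sum, Prod.smul_snd, Pi.add_apply,
        Finset.sum_apply, Pi.smul_apply, smul_eq_mul] at h2 ⊢
      push_cast
      have hsum : (∑ j, (⌊γ j⌋ : ℝ) * mr j) = ∑ j, (⌊γ j⌋ : ℝ) * (r j).2 i :=
        Finset.sum_congr rfl fun j _ => by rw [hmr j]
      rw [hsum]
      simp only [Int.fract, sub_mul, Finset.sum_sub_distrib]
      linarith [h2]
    · rw [add_assoc, ← Finset.sum_add_distrib]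
      congr 1
      refine Finset.sum_congr rfl fun j _ => ?_
      rw [← add_smul]
      rw [Int.fract, hfl j]
      ring
  · rintro ⟨y, ⟨⟨c, hc, b, ⟨γ, hγ, rfl⟩, rfl⟩, hyint⟩, w, ⟨lam, rfl⟩, rfl⟩
    constructor
    · refine ⟨c, hc, ∑ j, (γ j + (lam j : ℝ)) • r j,
        ⟨fun j => γ j + lam j, fun j => add_nonneg (hγ j).1 (lam j).cast_nonneg, rfl⟩, ?_⟩
      rw [add_assoc, ← Finset.sum_add_distrib]
      congr 1
      exact Finset.sum_congr rfl fun j _ => add_smul _ _ _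
    · intro i
      obtain ⟨m, hm⟩ := hyint i
      choose mr hmr using fun j => (hint j).2 i
      refine ⟨m + ∑ j, (lam j : ℤ) * mr j, ?_⟩
      have h2 : c.2 i + ∑ x, γ x * (r x).2 i = (m : ℝ) := by
        simpa only [Prod.snd_add, Prod.snd_sum, Prod.smul_snd, Pi.add_apply,
          Finset.sum_apply, Pi.smul_apply, smul_eq_mul] using hm
      have hsum : (∑ j, ((lam j : ℕ) : ℝ) * mr j) = ∑ j, ((lam j : ℕ) : ℝ) * (r j).2 i :=
        Finset.sum_congr rfl fun j _ => by rw [hmr j]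
      simp only [Prod.snd_add, Prod.snd_sum, Prod.smul_snd, Pi.add_apply,
        Finset.sum_apply, Pi.smul_apply, smul_eq_mul]
      push_cast
      rw [hsum]
      linarith [h2]
end
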